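/- arXiv:2402.01211 — 4 statements merged into one kernel-verified Lean document; each statement's English description precedes it below -/
import Mathlib

section
/- Let H be a separable real Hilbert space, T > 0, and let (f_n)_{n∈ℕ} be a sequence of càdlàg functions f_n : [0,T] → H converging uniformly on [0,T] to a (necessarily càdlàg) function f : [0,T] → H. Let k : H → ℝ be continuous, nonnegative, bounded, and vanishing in a neighbourhood of 0, i.e. there is δ > 0 with k(h) = 0 whenever ‖h‖ < δ. For a càdlàg g : [0,T] → H define the jump sum S_g(t) := Σ_{0 < s ≤ t} k(g(s) − g(s−)) (a finite sum, since only finitely many jumps have size ≥ δ). Then lim_{n→∞} sup_{t ∈ [0,T]} | S_{f_n}(t) − S_f(t) | = 0. -/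
/-! Left limits pass to uniform limits, so the jumps of `f n` converge to those of `F` uniformly
on `(0, T]`. An accumulation point of jumps of `F` of size `≥ δ / 2` would contradict the existence
of one-sided limits of `F` there, so there are finitely many such jumps. Hence, for large `n`, all
nonzero terms of both jump sums lie on this fixed finite set, and the difference of the sums is
bounded, uniformly in `t`, by finitely many terms `|k (Δfₙ s) - k (ΔF s)|`, each tending to zero
by continuity of `k`. -/

open Filter Set
open scoped Topology

theorem TendstoUniformlyOn.tendstoUniformlyOn_limits {ι X Y : Type*} [PseudoMetricSpace Y]
    {l : Filter ι} {f : ι → X → Y} {F : X → Y} {S S' : Set X} (h : TendstoUniformlyOn f F l S)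
    {m : X → Filter X} [∀ s, (m s).NeBot] (hmS : ∀ s ∈ S', S ∈ m s)
    {fl : ι → X → Y} {Fl : X → Y} (hfl : ∀ n, ∀ s ∈ S', Tendsto (f n) (m s) (𝓝 (fl n s)))
    (hFl : ∀ s ∈ S', Tendsto F (m s) (𝓝 (Fl s))) :
    TendstoUniformlyOn fl Fl l S' := by
  rw [Metric.tendstoUniformlyOn_iff] at h ⊢
  intro ε hε
  filter_upwards [h (ε / 2) (half_pos hε)] with n hn s hs
  have : dist (Fl s) (fl n s) ≤ ε / 2 :=
    le_of_tendsto ((hFl s hs).dist (hfl n s hs)) <|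
      eventually_of_mem (hmS s hs) fun x hx => (hn x hx).le
  linarith

theorem tendsto_limits_nhdsWithin {X Y : Type*} [TopologicalSpace X] [TopologicalSpace Y]
    [RegularSpace Y] {F Fl : X → Y} {m : X → Filter X} [∀ s, (m s).NeBot]
    (hm : ∀ s, m s ≤ 𝓝 s) {S : Set X} (hS : IsOpen S) {x : X} {a : Y}
    (hF : Tendsto F (𝓝[S] x) (𝓝 a)) (hFl : ∀ᶠ s in 𝓝[S] x, Tendsto F (m s) (𝓝 (Fl s))) :
    Tendsto Fl (𝓝[S] x) (𝓝 a) := by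
  refine (closed_nhds_basis a).tendsto_right_iff.2 fun C ⟨hCa, hC⟩ => ?_
  obtain ⟨u, hu, hxu, huC⟩ := mem_nhdsWithin.1 (hF hCa)
  filter_upwards [hFl, inter_mem_nhdsWithin S (hu.mem_nhds hxu)] with s hs ⟨hsS, hsu⟩
  exact hC.mem_of_tendsto hs <| mem_of_superset (hm s ((hu.inter hS).mem_nhds ⟨hsu, hsS⟩)) huC

theorem eventually_norm_sub_limits_lt {X E : Type*} [TopologicalSpace X] [SeminormedAddCommGroup E]
    {F Fl : X → E} {m : X → Filter X} [∀ s, (m s).NeBot]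
    (hm : ∀ s, m s ≤ 𝓝 s) {S : Set X} (hS : IsOpen S) {x : X} {a : E}
    (hF : Tendsto F (𝓝[S] x) (𝓝 a)) (hFl : ∀ᶠ s in 𝓝[S] x, Tendsto F (m s) (𝓝 (Fl s)))
    {c : ℝ} (hc : 0 < c) : ∀ᶠ s in 𝓝[S] x, ‖F s - Fl s‖ < c := by
  have h := (hF.sub (tendsto_limits_nhdsWithin hm hS hF hFl)).norm
  rw [sub_self, norm_zero] at h
  exact h.eventually (gt_mem_nhds hc)

theorem finite_setOf_le_norm_sub_leftLim {E : Type*} [SeminormedAddCommGroup E] {a b c : ℝ}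
    {F Fl : ℝ → E} (hFright : ∀ t ∈ Ico a b, Tendsto F (𝓝[>] t) (𝓝 (F t)))
    (hFleft : ∀ t ∈ Ioc a b, Tendsto F (𝓝[<] t) (𝓝 (Fl t))) (hc : 0 < c) :
    {s ∈ Ioc a b | c ≤ ‖F s - Fl s‖}.Finite := by
  by_contra hinf
  obtain ⟨x, hx, hacc⟩ := Set.Infinite.exists_accPt_of_subset_isCompact hinf isCompact_Icc
    fun s hs => Ioc_subset_Icc_self hs.1
  have hlt : ∀ᶠ s in 𝓝[<] x, s ∈ Ioc a b → ‖F s - Fl s‖ < c := by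
    rcases le_or_gt x a with hxa | hax
    · filter_upwards [self_mem_nhdsWithin] with s hs hsab
      exact absurd (hs.trans_le hxa) hsab.1.not_gt
    · have hFl : ∀ᶠ s in 𝓝[<] x, Tendsto F (𝓝[<] s) (𝓝 (Fl s)) := by
        filter_upwards [Ioo_mem_nhdsLT hax] with s hs using hFleft s ⟨hs.1, hs.2.le.trans hx.2⟩
      filter_upwards [eventually_norm_sub_limits_lt (fun _ => nhdsWithin_le_nhds) isOpen_Iio
        (hFleft x ⟨hax, hx.2⟩) hFl hc] with s hs _ using hs
  have hgt : ∀ᶠ s in 𝓝[>] x, s ∈ Ioc a b → ‖F s - Fl s‖ < c := by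
    rcases le_or_gt b x with hbx | hxb
    · filter_upwards [self_mem_nhdsWithin] with s hs hsab
      exact absurd (hbx.trans_lt hs) hsab.2.not_gt
    · have hFl : ∀ᶠ s in 𝓝[>] x, Tendsto F (𝓝[<] s) (𝓝 (Fl s)) := by
        filter_upwards [Ioc_mem_nhdsGT hxb] with s hs using hFleft s ⟨hx.1.trans_lt hs.1, hs.2⟩
      filter_upwards [eventually_norm_sub_limits_lt (fun _ => nhdsWithin_le_nhds) isOpen_Ioi
        (hFright x ⟨hx.1, hxb⟩) hFl hc] with s hs _ using hs
  have hnot : ∀ᶠ s in 𝓝[≠] x, s ∉ {s ∈ Ioc a b | c ≤ ‖F s - Fl s‖} := by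
    rw [← nhdsLT_sup_nhdsGT, eventually_sup]
    exact ⟨hlt.mono fun s hs hsJ => (hs hsJ.1).not_ge hsJ.2,
      hgt.mono fun s hs hsJ => (hs hsJ.1).not_ge hsJ.2⟩
  exact accPt_iff_frequently_nhdsNE.1 hacc hnot

theorem TendstoUniformlyOn.sub_leftLim {ι E : Type*} [SeminormedAddCommGroup E] {l : Filter ι}
    {a b : ℝ} {f : ι → ℝ → E} {F : ℝ → E} (h : TendstoUniformlyOn f F l (Icc a b))
    {fl : ι → ℝ → E} {Fl : ℝ → E} (hfl : ∀ n, ∀ t ∈ Ioc a b, Tendsto (f n) (𝓝[<] t) (𝓝 (fl n t)))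
    (hFl : ∀ t ∈ Ioc a b, Tendsto F (𝓝[<] t) (𝓝 (Fl t))) :
    TendstoUniformlyOn (fun n s => f n s - fl n s) (fun s => F s - Fl s) l (Ioc a b) :=
  (h.mono Ioc_subset_Icc_self).sub <| h.tendstoUniformlyOn_limits
    (fun _ hs => mem_of_superset (Ioo_mem_nhdsLT hs.1)
      (Ioo_subset_Icc_self.trans (Icc_subset_Icc_right hs.2)))
    hfl hFl

theorem norm_tsum_sub_tsum_le_sum {ι E : Type*} [SeminormedAddCommGroup E] {A : Set ι}
    {J : Finset ι} {u v : ι → E} (hu : ∀ s ∈ A, s ∉ J → u s = 0)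
    (hv : ∀ s ∈ A, s ∉ J → v s = 0) :
    ‖∑' s : A, u s - ∑' s : A, v s‖ ≤ ∑ s ∈ J, ‖u s - v s‖ := by
  have hsum : ∀ w : ι → E, (∀ s ∈ A, s ∉ J → w s = 0) →
      ∑' s : A, w s = ∑ s ∈ J, A.indicator w s := fun w hw => by
    rw [tsum_subtype]
    exact tsum_eq_sum fun s hs => indicator_apply_eq_zero.2 fun hsA => hw s hsA hs
  rw [hsum u hu, hsum v hv, ← Finset.sum_sub_distrib]
  refine (norm_sum_le _ _).trans (Finset.sum_le_sum fun s _ => ?_)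
  by_cases hs : s ∈ A <;> simp [hs]

theorem jump_sums_tendsto_uniformly_of_tendstoUniformly_general
    {H : Type*} [NormedAddCommGroup H]
    (T : ℝ)
    (f : ℕ → ℝ → H) (fl : ℕ → ℝ → H) (F : ℝ → H) (Fl : ℝ → H)
    (hleft : ∀ n, ∀ t ∈ Set.Ioc (0 : ℝ) T,
      Tendsto (f n) (nhdsWithin t (Set.Iio t)) (𝓝 (fl n t)))
    (hFright : ∀ t ∈ Set.Ico (0 : ℝ) T,
      Tendsto F (nhdsWithin t (Set.Ioi t)) (𝓝 (F t)))
    (hFleft : ∀ t ∈ Set.Ioc (0 : ℝ) T,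
      Tendsto F (nhdsWithin t (Set.Iio t)) (𝓝 (Fl t)))
    (hunif : TendstoUniformlyOn f F atTop (Set.Icc 0 T))
    (k : H → ℝ) (hk_cont : Continuous k)
    (hk_vanish : ∃ δ : ℝ, 0 < δ ∧ ∀ h : H, ‖h‖ < δ → k h = 0) :
    Tendsto
      (fun n : ℕ => ⨆ t : Set.Icc (0 : ℝ) T,
        |(∑' s : Set.Ioc (0 : ℝ) (t : ℝ), k (f n s - fl n s))
          - ∑' s : Set.Ioc (0 : ℝ) (t : ℝ), k (F s - Fl s)|)
      atTop (𝓝 0) := by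
  obtain ⟨δ, hδ, hk0⟩ := hk_vanish
  set J := (finite_setOf_le_norm_sub_leftLim hFright hFleft (half_pos hδ)).toFinset
  have hJ : ∀ s ∈ Ioc 0 T, s ∉ J → ‖F s - Fl s‖ < δ / 2 := fun s hs hsJ =>
    not_le.1 fun h => hsJ (by simpa [J] using ⟨hs, h⟩)
  have hjump := hunif.sub_leftLim hleft hFleft
  have hbound : ∀ᶠ n in atTop, ∀ t : Icc (0 : ℝ) T,
      |(∑' s : Ioc (0 : ℝ) t, k (f n s - fl n s)) - ∑' s : Ioc (0 : ℝ) t, k (F s - Fl s)|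
        ≤ ∑ s ∈ J, ‖k (f n s - fl n s) - k (F s - Fl s)‖ := by
    filter_upwards [Metric.tendstoUniformlyOn_iff.1 hjump (δ / 2) (half_pos hδ)] with n hn t
    have hsub : Ioc 0 (t : ℝ) ⊆ Ioc 0 T := Ioc_subset_Ioc_right t.2.2
    rw [← Real.norm_eq_abs]
    refine norm_tsum_sub_tsum_le_sum (u := fun s => k (f n s - fl n s)) (fun s hs hsJ => hk0 _ ?_)
      (fun s hs hsJ => hk0 _ ((hJ s (hsub hs) hsJ).trans (half_lt_self hδ)))
    calc ‖f n s - fl n s‖ ≤ ‖F s - Fl s‖ + dist (F s - Fl s) (f n s - fl n s) := by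
          rw [dist_comm, dist_eq_norm]; exact norm_le_norm_add_norm_sub' _ _
      _ < δ / 2 + δ / 2 := add_lt_add (hJ s (hsub hs) hsJ) (hn s (hsub hs))
      _ = δ := add_halves δ
  have hlim : Tendsto (fun n => ∑ s ∈ J, ‖k (f n s - fl n s) - k (F s - Fl s)‖) atTop (𝓝 0) := by
    simpa using tendsto_finsetSum J fun s hs => tendsto_iff_norm_sub_tendsto_zero.1 <|
      (hk_cont.tendsto _).comp (hjump.tendsto_at ((Finite.mem_toFinset _).1 hs).1)
  refine squeeze_zero' (Eventually.of_forall fun _ => Real.iSup_nonneg fun _ => abs_nonneg _)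
    ?_ hlim
  filter_upwards [hbound] with n hn
  exact Real.iSup_le hn (Finset.sum_nonneg fun _ _ => norm_nonneg _)

/-- **Uniform convergence of jump sums (Lemma 3.3).**
Let `H` be a separable real Hilbert space, `T > 0`, and let `f n : [0,T] → H` be càdlàg
functions (with left limits `fl n`) converging uniformly on `[0,T]` to the càdlàg
function `F` (with left limits `Fl`). Let `k : H → ℝ` be continuous, nonnegative,
bounded, and vanishing in a neighbourhood of `0`. Writing
`S g gl t := ∑_{0 < s ≤ t} k (g s - gl s)` for the jump sum (a finite sum, realised
here as a `tsum`), we have `sup_{t ∈ [0,T]} |S (f n) (fl n) t - S F Fl t| → 0`. -/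
theorem jump_sums_tendsto_uniformly_of_tendstoUniformly
    {H : Type*} [NormedAddCommGroup H] [InnerProductSpace ℝ H] [CompleteSpace H]
    [SecondCountableTopology H]
    (T : ℝ) (hT : 0 < T)
    (f : ℕ → ℝ → H) (fl : ℕ → ℝ → H) (F : ℝ → H) (Fl : ℝ → H)
    (hright : ∀ n, ∀ t ∈ Set.Ico (0 : ℝ) T,
      Tendsto (f n) (nhdsWithin t (Set.Ioi t)) (𝓝 (f n t)))
    (hleft : ∀ n, ∀ t ∈ Set.Ioc (0 : ℝ) T,
      Tendsto (f n) (nhdsWithin t (Set.Iio t)) (𝓝 (fl n t)))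
    (hFright : ∀ t ∈ Set.Ico (0 : ℝ) T,
      Tendsto F (nhdsWithin t (Set.Ioi t)) (𝓝 (F t)))
    (hFleft : ∀ t ∈ Set.Ioc (0 : ℝ) T,
      Tendsto F (nhdsWithin t (Set.Iio t)) (𝓝 (Fl t)))
    (hunif : TendstoUniformlyOn f F atTop (Set.Icc 0 T))
    (k : H → ℝ) (hk_cont : Continuous k) (hk_nonneg : ∀ h, 0 ≤ k h)
    (hk_bdd : ∃ M : ℝ, ∀ h, k h ≤ M)
    (hk_vanish : ∃ δ : ℝ, 0 < δ ∧ ∀ h : H, ‖h‖ < δ → k h = 0) :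
    Tendsto
      (fun n : ℕ => ⨆ t : Set.Icc (0 : ℝ) T,
        |(∑' s : Set.Ioc (0 : ℝ) (t : ℝ), k (f n s - fl n s))
          - ∑' s : Set.Ioc (0 : ℝ) (t : ℝ), k (F s - Fl s)|)
      atTop (𝓝 0) :=
  jump_sums_tendsto_uniformly_of_tendstoUniformly_general T f fl F Fl hleft hFright hFleft hunif k
    hk_cont hk_vanish
end

section
/- Let H be a separable real Hilbert space and let μ be a Borel measure on H with μ({0}) = 0 satisfying, for some constant C ≥ 0, the moment bounds ∫_{{g : ‖g‖ ≤ 1}} ‖g‖² dμ(g) ≤ C and ∫_{{g : ‖g‖ > 1}} ‖g‖ dμ(g) ≤ C. Let f : H → ℝ be twice continuously Fréchet differentiable with ‖Df(x)‖ ≤ a and ‖D²f(x)‖ ≤ b for all x ∈ H. Then for every h ∈ H, ∫_H | f(h+g) − f(h) − ⟨Df(h), g⟩ | dμ(g) ≤ C · (2a + b/2). -/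
/-!
The Taylor remainder `R(g) = f(h + g) - f(h) - ⟪Df(h), g⟫` is bounded by `(b/2) ‖g‖²`, since `Df`
is `b`-Lipschitz, and by `2a ‖g‖`, since `f` is `a`-Lipschitz. Integrating the first bound over the
unit ball and the second over its complement gives `C (b/2) + C (2a)`.
-/

open MeasureTheory Set
open scoped ENNReal RealInnerProductSpace

section Taylor

variable {E F : Type*} [NormedAddCommGroup E] [NormedSpace ℝ E]
  [NormedAddCommGroup F] [NormedSpace ℝ F] {f : E → F}

/- Along `t ↦ x + t • v` the remainder has derivative `(Df(x + t • v) - Df(x)) v`, of norm at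
most `b t ‖v‖²`; comparing with `t ↦ b t² ‖v‖² / 2` on `[0, 1]` gives the bound. -/
theorem norm_sub_sub_fderiv_apply_le_of_lipschitz_fderiv {b : ℝ} (hf : Differentiable ℝ f)
    (hf' : ∀ y z, ‖fderiv ℝ f y - fderiv ℝ f z‖ ≤ b * ‖y - z‖) (x v : E) :
    ‖f (x + v) - f x - fderiv ℝ f x v‖ ≤ b / 2 * ‖v‖ ^ 2 := by
  let φ : ℝ → F := fun t => f (x + t • v) - f x - t • fderiv ℝ f x v
  have hφ : ∀ t, HasDerivAt φ (fderiv ℝ f (x + t • v) v - fderiv ℝ f x v) t := by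
    intro t
    have hline : HasDerivAt (fun t : ℝ => x + t • v) v t := by
      simpa using ((hasDerivAt_id t).smul_const v).const_add x
    exact ((((hf _).hasFDerivAt.comp_hasDerivAt t hline).sub_const (f x)).sub
      ((hasDerivAt_id t).smul_const (fderiv ℝ f x v))).congr_deriv (by rw [one_smul])
  have hB : ∀ t : ℝ, HasDerivAt (fun t => b / 2 * ‖v‖ ^ 2 * t ^ 2) (b * ‖v‖ ^ 2 * t) t := by
    intro t
    exact ((hasDerivAt_pow 2 t).const_mul (b / 2 * ‖v‖ ^ 2)).congr_deriv (by norm_num; ring)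
  have hbound : ∀ t ∈ Ico (0 : ℝ) 1,
      ‖fderiv ℝ f (x + t • v) v - fderiv ℝ f x v‖ ≤ b * ‖v‖ ^ 2 * t := by
    rintro t ⟨ht, -⟩
    calc ‖fderiv ℝ f (x + t • v) v - fderiv ℝ f x v‖
        ≤ ‖fderiv ℝ f (x + t • v) - fderiv ℝ f x‖ * ‖v‖ :=
          (fderiv ℝ f (x + t • v) - fderiv ℝ f x).le_opNorm v
      _ ≤ b * ‖t • v‖ * ‖v‖ := by
          gcongr
          simpa using hf' (x + t • v) x
      _ = b * ‖v‖ ^ 2 * t := by rw [norm_smul, Real.norm_of_nonneg ht]; ring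
  simpa [φ] using image_norm_le_of_norm_deriv_right_le_deriv_boundary
    (fun t _ => (hφ t).continuousAt.continuousWithinAt) (fun t _ => (hφ t).hasDerivWithinAt)
    (by simp [φ]) hB hbound (right_mem_Icc.2 zero_le_one)

theorem norm_sub_sub_fderiv_apply_le_of_norm_fderiv_le {a : ℝ} (hf : Differentiable ℝ f)
    (hf' : ∀ y, ‖fderiv ℝ f y‖ ≤ a) (x v : E) :
    ‖f (x + v) - f x - fderiv ℝ f x v‖ ≤ 2 * a * ‖v‖ := by
  have hincr : ‖f (x + v) - f x‖ ≤ a * ‖v‖ := by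
    simpa using convex_univ.norm_image_sub_le_of_norm_fderiv_le (fun y _ => hf y)
      (fun y _ => hf' y) (mem_univ x) (mem_univ (x + v))
  have hlin : ‖fderiv ℝ f x v‖ ≤ a * ‖v‖ := (fderiv ℝ f x).le_of_opNorm_le (hf' x) v
  calc ‖f (x + v) - f x - fderiv ℝ f x v‖ ≤ ‖f (x + v) - f x‖ + ‖fderiv ℝ f x v‖ :=
        norm_sub_le _ _
    _ ≤ 2 * a * ‖v‖ := by linarith

end Taylor

theorem lintegral_ofReal_le_of_le_sq_of_le_norm {E : Type*} [SeminormedAddCommGroup E]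
    [MeasurableSpace E] (μ : Measure E) {F : E → ℝ} {α β : ℝ}
    (hsq : ∀ g, F g ≤ β * ‖g‖ ^ 2) (hnorm : ∀ g, F g ≤ α * ‖g‖) :
    ∫⁻ g, ENNReal.ofReal (F g) ∂μ
      ≤ ENNReal.ofReal β * ∫⁻ g in {g : E | ‖g‖ ≤ 1}, ENNReal.ofReal (‖g‖ ^ 2) ∂μ
        + ENNReal.ofReal α * ∫⁻ g in {g : E | 1 < ‖g‖}, ENNReal.ofReal ‖g‖ ∂μ := by
  have hcover : {g : E | ‖g‖ ≤ 1} ∪ {g : E | 1 < ‖g‖} = univ := by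
    ext g; simpa using le_or_gt ‖g‖ 1
  calc ∫⁻ g, ENNReal.ofReal (F g) ∂μ
      = ∫⁻ g in {g : E | ‖g‖ ≤ 1} ∪ {g : E | 1 < ‖g‖}, ENNReal.ofReal (F g) ∂μ := by
        rw [hcover, Measure.restrict_univ]
    _ ≤ ∫⁻ g in {g : E | ‖g‖ ≤ 1}, ENNReal.ofReal (F g) ∂μ
        + ∫⁻ g in {g : E | 1 < ‖g‖}, ENNReal.ofReal (F g) ∂μ := lintegral_union_le _ _ _
    _ ≤ ∫⁻ g in {g : E | ‖g‖ ≤ 1}, ENNReal.ofReal β * ENNReal.ofReal (‖g‖ ^ 2) ∂μ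
        + ∫⁻ g in {g : E | 1 < ‖g‖}, ENNReal.ofReal α * ENNReal.ofReal ‖g‖ ∂μ := by
        gcongr with g g
        · rw [← ENNReal.ofReal_mul' (by positivity)]
          exact ENNReal.ofReal_le_ofReal (hsq g)
        · rw [← ENNReal.ofReal_mul' (norm_nonneg g)]
          exact ENNReal.ofReal_le_ofReal (hnorm g)
    _ = _ := by
        rw [lintegral_const_mul' _ _ ENNReal.ofReal_ne_top,
          lintegral_const_mul' _ _ ENNReal.ofReal_ne_top]

theorem taylor_remainder_integral_le_general
    {H : Type*} [NormedAddCommGroup H] [InnerProductSpace ℝ H] [CompleteSpace H]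
    [MeasurableSpace H]
    (μ : Measure H)
    (C : ℝ)
    (hsmall : ∫⁻ g in {g : H | ‖g‖ ≤ 1}, ENNReal.ofReal (‖g‖ ^ 2) ∂μ ≤ ENNReal.ofReal C)
    (hbig : ∫⁻ g in {g : H | 1 < ‖g‖}, ENNReal.ofReal ‖g‖ ∂μ ≤ ENNReal.ofReal C)
    (f : H → ℝ) (hf : ContDiff ℝ 2 f)
    (a b : ℝ)
    (ha : ∀ x : H, ‖gradient f x‖ ≤ a)
    (hb : ∀ x : H, ‖fderiv ℝ (fderiv ℝ f) x‖ ≤ b) :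
    ∀ h : H,
      ∫⁻ g, ENNReal.ofReal |f (h + g) - f h - ⟪gradient f h, g⟫| ∂μ
        ≤ ENNReal.ofReal (C * (2 * a + b / 2)) := by
  intro h
  have hDf : ∀ x, ‖fderiv ℝ f x‖ ≤ a := fun x =>
    (InnerProductSpace.toDual ℝ H).symm.norm_map (fderiv ℝ f x) ▸ ha x
  have hLip : ∀ y z, ‖fderiv ℝ f y - fderiv ℝ f z‖ ≤ b * ‖y - z‖ := fun y z =>
    convex_univ.norm_image_sub_le_of_norm_fderiv_le
      (fun x _ => ((hf.fderiv_right (m := 1) le_rfl).differentiable one_ne_zero) x)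
      (fun x _ => hb x) (mem_univ z) (mem_univ y)
  have hfd : Differentiable ℝ f := hf.differentiable two_ne_zero
  have ha0 : 0 ≤ a := (norm_nonneg _).trans (ha 0)
  have hb0 : 0 ≤ b := (ContinuousLinearMap.opNorm_nonneg _).trans (hb 0)
  simp_rw [inner_gradient_left]
  calc _ ≤ ENNReal.ofReal (b / 2) * ENNReal.ofReal C
        + ENNReal.ofReal (2 * a) * ENNReal.ofReal C :=
        (lintegral_ofReal_le_of_le_sq_of_le_norm μ
          (norm_sub_sub_fderiv_apply_le_of_lipschitz_fderiv hfd hLip h)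
          (norm_sub_sub_fderiv_apply_le_of_norm_fderiv_le hfd hDf h)).trans (by gcongr)
    _ = ENNReal.ofReal (C * (2 * a + b / 2)) := by
        rw [mul_comm C, ENNReal.ofReal_mul (p := 2 * a + b / 2) (by positivity),
          ENNReal.ofReal_add (by positivity) (by positivity)]
        ring

/-- **Taylor-remainder integral estimate (Lemma 5.2).**
Let `H` be a separable real Hilbert space and `μ` a Borel measure on `H` with
`μ {0} = 0`, `∫_{‖g‖ ≤ 1} ‖g‖² dμ ≤ C` and `∫_{‖g‖ > 1} ‖g‖ dμ ≤ C`. If `f : H → ℝ`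
is twice continuously Fréchet differentiable with `‖Df(x)‖ ≤ a` and `‖D²f(x)‖ ≤ b`
for all `x`, then for every `h ∈ H`,
`∫_H |f(h+g) - f(h) - ⟪Df(h), g⟫| dμ(g) ≤ C * (2a + b/2)`. -/
theorem taylor_remainder_integral_le
    {H : Type*} [NormedAddCommGroup H] [InnerProductSpace ℝ H] [CompleteSpace H]
    [SecondCountableTopology H] [MeasurableSpace H] [BorelSpace H]
    (μ : Measure H) (hzero : μ {0} = 0)
    (C : ℝ) (hC : 0 ≤ C)
    (hsmall : ∫⁻ g in {g : H | ‖g‖ ≤ 1}, ENNReal.ofReal (‖g‖ ^ 2) ∂μ ≤ ENNReal.ofReal C)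
    (hbig : ∫⁻ g in {g : H | 1 < ‖g‖}, ENNReal.ofReal ‖g‖ ∂μ ≤ ENNReal.ofReal C)
    (f : H → ℝ) (hf : ContDiff ℝ 2 f)
    (a b : ℝ)
    (ha : ∀ x : H, ‖gradient f x‖ ≤ a)
    (hb : ∀ x : H, ‖fderiv ℝ (fderiv ℝ f) x‖ ≤ b) :
    ∀ h : H,
      ∫⁻ g, ENNReal.ofReal |f (h + g) - f h - ⟪gradient f h, g⟫| ∂μ
        ≤ ENNReal.ofReal (C * (2 * a + b / 2)) :=
  taylor_remainder_integral_le_general μ C hsmall hbig f hf a b ha hb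
end

section
/- Let H be a separable real Hilbert space and let μ be a Borel measure on H with μ({0}) = 0 satisfying, for some constant C ≥ 0, the moment bounds ∫_{{b : ‖b‖ ≤ 1}} ‖b‖² dμ(b) ≤ C and ∫_{{b : ‖b‖ > 1}} ‖b‖ dμ(b) ≤ C. Let f : H → ℝ be twice continuously Fréchet differentiable with bounded first and second derivatives, and set T_f(g,b) := f(g+b) − f(g) − ⟨Df(g), b⟩. Then for all g, h ∈ H, ∫_H | T_f(g,b) − T_f(h,b) | dμ(b) ≤ 2C · ( sup_{‖b‖ ≤ 1} ‖D²f(g+b) − D²f(h+b)‖ + ‖D²f‖_∞ · ‖g − h‖ ), where ‖D²f‖_∞ = sup_{x∈H} ‖D²f(x)‖ and the norms of second derivatives are operator norms. -/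
/-!
Write `φ(b) = T_f(g,b) - T_f(h,b)`. Then `φ(0) = 0`, `Dφ(x) = Df(g+x) - Df(h+x) - (Df(g) - Df(h))`
vanishes at `0`, and `D²φ(x) = D²f(g+x) - D²f(h+x)`. Two applications of the mean value
inequality give `|φ(b)| ≤ S ‖b‖²` on the unit ball, where `S` bounds `‖D²φ‖` there. Since `Df` is
`‖D²f‖_∞`-Lipschitz, `‖Dφ‖ ≤ 2 ‖D²f‖_∞ ‖g - h‖` everywhere, so `|φ(b)| ≤ 2 ‖D²f‖_∞ ‖g - h‖ ‖b‖`.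
Integrating the first bound against `μ` on the unit ball and the second outside it gives the
estimate.
-/

open MeasureTheory Metric
open scoped ENNReal RealInnerProductSpace

section

variable {E F : Type*} [NormedAddCommGroup E] [NormedAddCommGroup F]

theorem setLIntegral_ofReal_norm_le_mul {α : Type*} [MeasurableSpace α] {μ : Measure α}
    {s : Set α} (hs : MeasurableSet s) {u : α → F} {w : α → ℝ} {A : ℝ} {c : ℝ≥0∞}
    (hw : ∀ x ∈ s, 0 ≤ w x) (hu : ∀ x ∈ s, ‖u x‖ ≤ A * w x)
    (hc : ∫⁻ x in s, ENNReal.ofReal (w x) ∂μ ≤ c) :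
    ∫⁻ x in s, ENNReal.ofReal ‖u x‖ ∂μ ≤ ENNReal.ofReal A * c :=
  calc ∫⁻ x in s, ENNReal.ofReal ‖u x‖ ∂μ
      ≤ ∫⁻ x in s, ENNReal.ofReal A * ENNReal.ofReal (w x) ∂μ :=
        setLIntegral_mono' hs fun x hx => by
          rw [← ENNReal.ofReal_mul' (hw x hx)]
          exact ENNReal.ofReal_le_ofReal (hu x hx)
    _ = ENNReal.ofReal A * ∫⁻ x in s, ENNReal.ofReal (w x) ∂μ :=
        lintegral_const_mul' _ _ ENNReal.ofReal_ne_top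
    _ ≤ ENNReal.ofReal A * c := by gcongr

theorem lintegral_ofReal_norm_le_of_le_mul_sq_of_le_mul_norm [MeasurableSpace E] [BorelSpace E]
    {μ : Measure E} {u : E → F} {A B : ℝ} {c₁ c₂ : ℝ≥0∞}
    (hu_small : ∀ b : E, ‖b‖ ≤ 1 → ‖u b‖ ≤ A * ‖b‖ ^ 2)
    (hu_large : ∀ b : E, 1 < ‖b‖ → ‖u b‖ ≤ B * ‖b‖)
    (h_small : ∫⁻ b in {b : E | ‖b‖ ≤ 1}, ENNReal.ofReal (‖b‖ ^ 2) ∂μ ≤ c₁)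
    (h_large : ∫⁻ b in {b : E | 1 < ‖b‖}, ENNReal.ofReal ‖b‖ ∂μ ≤ c₂) :
    ∫⁻ b, ENNReal.ofReal ‖u b‖ ∂μ ≤ ENNReal.ofReal A * c₁ + ENNReal.ofReal B * c₂ := by
  have hmeas : MeasurableSet {b : E | ‖b‖ ≤ 1} :=
    (isClosed_le continuous_norm continuous_const).measurableSet
  have hcompl : {b : E | ‖b‖ ≤ 1}ᶜ = {b : E | 1 < ‖b‖} := by ext; simp
  rw [← lintegral_add_compl _ hmeas, hcompl]
  exact add_le_add
    (setLIntegral_ofReal_norm_le_mul hmeas (fun _ _ => by positivity) hu_small h_small)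
    (setLIntegral_ofReal_norm_le_mul (hcompl ▸ hmeas.compl) (fun _ _ => norm_nonneg _)
      hu_large h_large)

variable [NormedSpace ℝ E] [NormedSpace ℝ F]

theorem norm_image_sub_le_mul_sq_of_hasFDerivAt {ψ : E → F} {ψ' : E → E →L[ℝ] F}
    {ψ'' : E → E →L[ℝ] E →L[ℝ] F} {b : E} {S : ℝ}
    (hψ : ∀ x ∈ closedBall (0 : E) ‖b‖, HasFDerivAt ψ (ψ' x) x)
    (hψ' : ∀ x ∈ closedBall (0 : E) ‖b‖, HasFDerivAt ψ' (ψ'' x) x)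
    (h0 : ψ' 0 = 0) (hS : ∀ x ∈ closedBall (0 : E) ‖b‖, ‖ψ'' x‖ ≤ S) :
    ‖ψ b - ψ 0‖ ≤ S * ‖b‖ ^ 2 := by
  have hball := convex_closedBall (0 : E) ‖b‖
  have h0mem : (0 : E) ∈ closedBall (0 : E) ‖b‖ := mem_closedBall_self (norm_nonneg b)
  have hS0 : 0 ≤ S := (norm_nonneg (ψ'' 0)).trans (hS 0 h0mem)
  have hψ'_le : ∀ x ∈ closedBall (0 : E) ‖b‖, ‖ψ' x‖ ≤ S * ‖b‖ := fun x hx => by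
    have h := hball.norm_image_sub_le_of_norm_hasFDerivWithin_le
      (fun y hy => (hψ' y hy).hasFDerivWithinAt) hS h0mem hx
    rw [h0, sub_zero, sub_zero] at h
    exact h.trans (mul_le_mul_of_nonneg_left (mem_closedBall_zero_iff.1 hx) hS0)
  calc ‖ψ b - ψ 0‖ ≤ S * ‖b‖ * ‖b - 0‖ :=
        hball.norm_image_sub_le_of_norm_hasFDerivWithin_le
          (fun y hy => (hψ y hy).hasFDerivWithinAt) hψ'_le h0mem (by simp)
    _ = S * ‖b‖ ^ 2 := by rw [sub_zero]; ring

noncomputable def taylorRemainder (f : E → F) (g b : E) : F :=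
  f (g + b) - f g - fderiv ℝ f g b

variable {f : E → F}

@[simp]
theorem taylorRemainder_zero (f : E → F) (g : E) : taylorRemainder f g 0 = 0 := by
  simp [taylorRemainder]

theorem hasFDerivAt_taylorRemainder (hf : Differentiable ℝ f) (g x : E) :
    HasFDerivAt (taylorRemainder f g) (fderiv ℝ f (g + x) - fderiv ℝ f g) x :=
  (((hasFDerivAt_comp_add_left g).2 (hf (g + x)).hasFDerivAt).sub_const (f g)).sub
    (fderiv ℝ f g).hasFDerivAt

theorem norm_taylorRemainder_sub_le_mul_sq (hf : Differentiable ℝ f)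
    (hf' : Differentiable ℝ (fderiv ℝ f)) {g h b : E} {S : ℝ}
    (hS : ∀ x ∈ closedBall (0 : E) ‖b‖,
      ‖fderiv ℝ (fderiv ℝ f) (g + x) - fderiv ℝ (fderiv ℝ f) (h + x)‖ ≤ S) :
    ‖taylorRemainder f g b - taylorRemainder f h b‖ ≤ S * ‖b‖ ^ 2 := by
  have hD (a x : E) : HasFDerivAt (fun y => fderiv ℝ f (a + y) - fderiv ℝ f a)
      (fderiv ℝ (fderiv ℝ f) (a + x)) x :=
    ((hasFDerivAt_comp_add_left a).2 (hf' (a + x)).hasFDerivAt).sub_const _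
  simpa using norm_image_sub_le_mul_sq_of_hasFDerivAt
    (fun x _ => (hasFDerivAt_taylorRemainder hf g x).sub (hasFDerivAt_taylorRemainder hf h x))
    (fun x _ => (hD g x).sub (hD h x)) (by simp) hS

theorem norm_taylorRemainder_sub_le_mul_norm (hf : Differentiable ℝ f)
    (hf' : Differentiable ℝ (fderiv ℝ f)) {M : ℝ}
    (hM : ∀ x, ‖fderiv ℝ (fderiv ℝ f) x‖ ≤ M) (g h b : E) :
    ‖taylorRemainder f g b - taylorRemainder f h b‖ ≤ 2 * M * ‖g - h‖ * ‖b‖ := by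
  have hlip (x y : E) : ‖fderiv ℝ f x - fderiv ℝ f y‖ ≤ M * ‖x - y‖ :=
    convex_univ.norm_image_sub_le_of_norm_fderiv_le (fun z _ => hf' z) (fun z _ => hM z)
      (Set.mem_univ y) (Set.mem_univ x)
  have hderiv (x : E) :
      ‖(fderiv ℝ f (g + x) - fderiv ℝ f g) - (fderiv ℝ f (h + x) - fderiv ℝ f h)‖
        ≤ 2 * M * ‖g - h‖ := by
    rw [sub_sub_sub_comm]
    calc _ ≤ ‖fderiv ℝ f (g + x) - fderiv ℝ f (h + x)‖ + ‖fderiv ℝ f g - fderiv ℝ f h‖ :=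
          norm_sub_le _ _
      _ ≤ M * ‖g - h‖ + M * ‖g - h‖ := by
          gcongr
          · simpa using hlip (g + x) (h + x)
          · exact hlip g h
      _ = 2 * M * ‖g - h‖ := by ring
  simpa using convex_univ.norm_image_sub_le_of_norm_hasFDerivWithin_le
    (fun x _ => ((hasFDerivAt_taylorRemainder hf g x).sub
      (hasFDerivAt_taylorRemainder hf h x)).hasFDerivWithinAt)
    (fun x _ => hderiv x) (Set.mem_univ 0) (Set.mem_univ b)

end

theorem taylor_remainder_difference_integral_le_general
    {H : Type*} [NormedAddCommGroup H] [InnerProductSpace ℝ H] [CompleteSpace H]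
    [MeasurableSpace H] [BorelSpace H]
    (μ : Measure H)
    (C : ℝ)
    (hsmall : ∫⁻ b in {b : H | ‖b‖ ≤ 1}, ENNReal.ofReal (‖b‖ ^ 2) ∂μ ≤ ENNReal.ofReal C)
    (hbig : ∫⁻ b in {b : H | 1 < ‖b‖}, ENNReal.ofReal ‖b‖ ∂μ ≤ ENNReal.ofReal C)
    (f : H → ℝ) (hf : ContDiff ℝ 2 f)
    (bnd : ℝ)
    (hbnd : ∀ x : H, ‖fderiv ℝ (fderiv ℝ f) x‖ ≤ bnd)
    (Tf : H → H → ℝ)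
    (hTf : ∀ g b : H, Tf g b = f (g + b) - f g - ⟪gradient f g, b⟫) :
    ∀ g h : H,
      ∫⁻ b, ENNReal.ofReal |Tf g b - Tf h b| ∂μ
        ≤ ENNReal.ofReal (2 * C *
            ((⨆ b : {b : H // ‖b‖ ≤ 1},
                ‖fderiv ℝ (fderiv ℝ f) (g + (b : H)) - fderiv ℝ (fderiv ℝ f) (h + (b : H))‖)
              + (⨆ x : H, ‖fderiv ℝ (fderiv ℝ f) x‖) * ‖g - h‖)) := by
  intro g h
  have hf1 : Differentiable ℝ f := hf.differentiable (by norm_num)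
  have hf2 : Differentiable ℝ (fderiv ℝ f) := (hf.fderiv_right le_rfl).differentiable one_ne_zero
  set D2 := fderiv ℝ (fderiv ℝ f)
  set S := ⨆ b : {b : H // ‖b‖ ≤ 1}, ‖D2 (g + (b : H)) - D2 (h + (b : H))‖
  set M := ⨆ x : H, ‖D2 x‖
  have hM (x : H) : ‖D2 x‖ ≤ M := le_ciSup ⟨bnd, by rintro _ ⟨y, rfl⟩; exact hbnd y⟩ x
  have hS {x : H} (hx : ‖x‖ ≤ 1) : ‖D2 (g + x) - D2 (h + x)‖ ≤ S := by
    refine le_ciSup (f := fun b : {b : H // ‖b‖ ≤ 1} => ‖D2 (g + (b : H)) - D2 (h + (b : H))‖)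
      ⟨M + M, ?_⟩ ⟨x, hx⟩
    rintro _ ⟨y, rfl⟩
    exact (norm_sub_le (D2 (g + y.1)) _).trans (add_le_add (hM _) (hM _))
  have hS0 : 0 ≤ S := (norm_nonneg (D2 (g + 0) - D2 (h + 0))).trans (hS (x := 0) (by simp))
  have hM0 : 0 ≤ M := (norm_nonneg (D2 0)).trans (hM 0)
  have hTf_eq (a b : H) : Tf a b = taylorRemainder f a b := by
    rw [hTf, inner_gradient_left, taylorRemainder]
  have hint := lintegral_ofReal_norm_le_of_le_mul_sq_of_le_mul_norm
    (u := fun b => Tf g b - Tf h b) (A := S) (B := 2 * M * ‖g - h‖)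
    (fun b hb => by
      simpa only [hTf_eq] using norm_taylorRemainder_sub_le_mul_sq hf1 hf2
        fun x hx => hS ((mem_closedBall_zero_iff.1 hx).trans hb))
    (fun b _ => by
      simpa only [hTf_eq] using norm_taylorRemainder_sub_le_mul_norm hf1 hf2 hM g h b)
    hsmall hbig
  refine hint.trans ?_
  rw [← add_mul, ← ENNReal.ofReal_add hS0 (by positivity),
    show 2 * C * (S + M * ‖g - h‖) = 2 * (S + M * ‖g - h‖) * C by ring,
    ENNReal.ofReal_mul (p := 2 * (S + M * ‖g - h‖)) (by positivity)]
  gcongr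
  linarith

/-- **Difference of Taylor remainders integral estimate (Lemma 8.3).**
Let `H` be a separable real Hilbert space and `μ` a Borel measure on `H` with
`μ {0} = 0`, `∫_{‖b‖ ≤ 1} ‖b‖² dμ ≤ C` and `∫_{‖b‖ > 1} ‖b‖ dμ ≤ C`. If `f : H → ℝ`
is twice continuously Fréchet differentiable with bounded first and second
derivatives, then with `T_f(g,b) := f(g+b) - f(g) - ⟪Df(g), b⟫` one has, for all
`g h ∈ H`,
`∫_H |T_f(g,b) - T_f(h,b)| dμ(b)
  ≤ 2C * ( sup_{‖b‖ ≤ 1} ‖D²f(g+b) - D²f(h+b)‖ + ‖D²f‖_∞ * ‖g - h‖ )`. -/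
theorem taylor_remainder_difference_integral_le
    {H : Type*} [NormedAddCommGroup H] [InnerProductSpace ℝ H] [CompleteSpace H]
    [SecondCountableTopology H] [MeasurableSpace H] [BorelSpace H]
    (μ : Measure H) (hzero : μ {0} = 0)
    (C : ℝ) (hC : 0 ≤ C)
    (hsmall : ∫⁻ b in {b : H | ‖b‖ ≤ 1}, ENNReal.ofReal (‖b‖ ^ 2) ∂μ ≤ ENNReal.ofReal C)
    (hbig : ∫⁻ b in {b : H | 1 < ‖b‖}, ENNReal.ofReal ‖b‖ ∂μ ≤ ENNReal.ofReal C)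
    (f : H → ℝ) (hf : ContDiff ℝ 2 f)
    (a bnd : ℝ)
    (ha : ∀ x : H, ‖gradient f x‖ ≤ a)
    (hbnd : ∀ x : H, ‖fderiv ℝ (fderiv ℝ f) x‖ ≤ bnd)
    (Tf : H → H → ℝ)
    (hTf : ∀ g b : H, Tf g b = f (g + b) - f g - ⟪gradient f g, b⟫) :
    ∀ g h : H,
      ∫⁻ b, ENNReal.ofReal |Tf g b - Tf h b| ∂μ
        ≤ ENNReal.ofReal (2 * C *
            ((⨆ b : {b : H // ‖b‖ ≤ 1},
                ‖fderiv ℝ (fderiv ℝ f) (g + (b : H)) - fderiv ℝ (fderiv ℝ f) (h + (b : H))‖)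
              + (⨆ x : H, ‖fderiv ℝ (fderiv ℝ f) x‖) * ‖g - h‖)) :=
  taylor_remainder_difference_integral_le_general μ C hsmall hbig f hf bnd hbnd Tf hTf
end

section
/- Let V be a separable real Hilbert space and let (A_m)_{m∈ℕ} be a sequence of continuous linear operators A_m : V → V converging strongly to 0, i.e. ‖A_m x‖ → 0 as m → ∞ for every x ∈ V. Let (Ω, Σ, P) be a probability space and let (B_n)_{n∈ℕ} be a sequence of V-valued random variables that is uniformly bounded (there exists c > 0 with ‖B_n‖ ≤ c almost surely for every n) and tight (for every ε > 0 there exists a compact set K ⊆ V with P(B_n ∉ K) < ε for every n). Then for every p > 0, lim_{m→∞} sup_{n∈ℕ} E[ ‖A_m B_n‖^p ] = 0. -/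
open MeasureTheory Filter
open scoped ENNReal Topology

/-!
By Banach–Steinhaus the operators `A m` are uniformly bounded, hence equicontinuous, so they
converge to `0` uniformly on compact sets. If a compact `K` carries all but `ε` of the mass of
every `B n`, then `E ‖A m (B n)‖ ^ p` splits into the contribution of `{B n ∈ K}`, uniformly small
for large `m`, and that of `{B n ∉ K}`, at most `(C c) ^ p ε` where `C` bounds `‖A m‖`.
-/

theorem EquicontinuousOn.tendstoUniformlyOn_of_tendsto {ι X α : Type*} [TopologicalSpace X]
    [UniformSpace α] {F : ι → X → α} {f : X → α} {l : Filter ι} {K : Set X}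
    (hF : EquicontinuousOn F K) (hK : IsCompact K) (h : ∀ x ∈ K, Tendsto (F · x) l (𝓝 (f x))) :
    TendstoUniformlyOn F f l K := by
  have : CompactSpace K := isCompact_iff_compactSpace.mp hK
  rw [tendstoUniformlyOn_iff_tendstoUniformly_comp_coe]
  exact UniformFun.tendsto_iff_tendstoUniformly.mp <|
    ((equicontinuous_restrict_iff F).mpr hF).tendsto_uniformFun_iff_pi l
      (K.domRestrict f) |>.mpr <| tendsto_pi_nhds.mpr fun x => h x x.2

namespace ContinuousLinearMap

variable {𝕜 E F : Type*} [NontriviallyNormedField 𝕜] [NormedAddCommGroup E] [NormedSpace 𝕜 E]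
  [CompleteSpace E] [NormedAddCommGroup F] [NormedSpace 𝕜 F]
  {A : ℕ → E →L[𝕜] F} {f : E → F}

theorem exists_forall_opNorm_le_of_tendsto (hA : ∀ x, Tendsto (A · x) atTop (𝓝 (f x))) :
    ∃ C, ∀ m, ‖A m‖ ≤ C :=
  banach_steinhaus fun x => (hA x).norm.isBoundedUnder_le.bddAbove_range.imp
    fun _ hb m => hb ⟨m, rfl⟩

theorem tendstoUniformlyOn_of_tendsto (hA : ∀ x, Tendsto (A · x) atTop (𝓝 (f x)))
    {K : Set E} (hK : IsCompact K) : TendstoUniformlyOn (fun m => ⇑(A m)) f atTop K := by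
  have hequi : Equicontinuous fun m => ⇑(A m) :=
    (NormedSpace.equicontinuous_TFAE A).out 5 1 |>.mp (exists_forall_opNorm_le_of_tendsto hA)
  exact (hequi.equicontinuousOn K).tendstoUniformlyOn_of_tendsto hK fun x _ => hA x

end ContinuousLinearMap

section Moments

variable {Ω : Type*} [MeasurableSpace Ω] {P : Measure Ω} [IsProbabilityMeasure P]

theorem integral_le_add_mul_measureReal_compl {f : Ω → ℝ} {S : Set Ω} {a b : ℝ} (ha : 0 ≤ a)
    (hb : 0 ≤ b) (hf0 : 0 ≤ᵐ[P] f) (hfS : ∀ ω ∈ S, f ω ≤ a) (hfb : ∀ᵐ ω ∂P, f ω ≤ b) :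
    ∫ ω, f ω ∂P ≤ a + b * P.real Sᶜ := by
  -- `S` need not be measurable, so the exceptional set is replaced by a measurable hull.
  set T := toMeasurable P Sᶜ
  have hT : MeasurableSet T := measurableSet_toMeasurable P Sᶜ
  have hfT : ∀ᵐ ω ∂P, f ω ≤ a + T.indicator (fun _ => b) ω := by
    filter_upwards [hfb] with ω hω
    by_cases hωS : ω ∈ S
    · exact (hfS ω hωS).trans (le_add_of_nonneg_right (Set.indicator_nonneg (fun _ _ => hb) ω))
    · rw [Set.indicator_of_mem (subset_toMeasurable P Sᶜ hωS)]
      linarith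
  calc ∫ ω, f ω ∂P ≤ ∫ ω, a + T.indicator (fun _ => b) ω ∂P :=
        integral_mono_of_nonneg hf0 ((integrable_const a).add ((integrable_const b).indicator hT))
          hfT
    _ = a + b * P.real Sᶜ := by
        rw [integral_add (integrable_const a) ((integrable_const b).indicator hT), integral_const,
          integral_indicator_const b hT]
        simp [Measure.real, T, mul_comm]

variable {𝕜 E F : Type*} [NontriviallyNormedField 𝕜] [NormedAddCommGroup E] [NormedSpace 𝕜 E]
  [NormedAddCommGroup F] [NormedSpace 𝕜 F]

theorem integral_rpow_norm_apply_le {T : E →L[𝕜] F} {X : Ω → E} {K : Set E} {p δ C c : ℝ}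
    (hp : 0 ≤ p) (hδ : 0 ≤ δ) (hc : 0 ≤ c) (hTK : ∀ x ∈ K, ‖T x‖ ≤ δ) (hT : ‖T‖ ≤ C)
    (hX : ∀ᵐ ω ∂P, ‖X ω‖ ≤ c) :
    ∫ ω, ‖T (X ω)‖ ^ p ∂P ≤ δ ^ p + (C * c) ^ p * P.real {ω | X ω ∉ K} := by
  have hC : 0 ≤ C := (norm_nonneg T).trans hT
  refine integral_le_add_mul_measureReal_compl (by positivity) (by positivity)
    (Eventually.of_forall fun ω => by positivity)
    (fun ω hω => Real.rpow_le_rpow (norm_nonneg _) (hTK _ hω) hp) ?_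
  filter_upwards [hX] with ω hω
  exact Real.rpow_le_rpow (norm_nonneg _)
    ((T.le_opNorm _).trans (mul_le_mul hT hω (norm_nonneg _) hC)) hp

end Moments

theorem sup_moment_tendsto_zero_of_strong_convergence_general
    {V : Type*} [NormedAddCommGroup V] [InnerProductSpace ℝ V] [CompleteSpace V]
    {Ω : Type*} [MeasurableSpace Ω] (P : Measure Ω) [IsProbabilityMeasure P]
    (A : ℕ → V →L[ℝ] V)
    (hA : ∀ x : V, Tendsto (fun m : ℕ => A m x) atTop (𝓝 0))
    (B : ℕ → Ω → V)
    (c : ℝ) (hc : 0 < c)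
    (hbound : ∀ n, ∀ᵐ ω ∂P, ‖B n ω‖ ≤ c)
    (htight : ∀ ε : ℝ, 0 < ε → ∃ K : Set V, IsCompact K ∧
      ∀ n, P {ω | B n ω ∉ K} < ENNReal.ofReal ε) :
    ∀ p : ℝ, 0 < p →
      Tendsto (fun m : ℕ => ⨆ n : ℕ, ∫ ω, ‖A m (B n ω)‖ ^ p ∂P) atTop (𝓝 0) := by
  intro p hp
  obtain ⟨C, hC⟩ := ContinuousLinearMap.exists_forall_opNorm_le_of_tendsto hA
  have hC0 : 0 ≤ C := (norm_nonneg _).trans (hC 0)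
  refine tendsto_order.2 ⟨fun a ha => Eventually.of_forall fun m => ha.trans_le <|
    Real.iSup_nonneg fun n => integral_nonneg fun ω => by positivity, fun ε hε => ?_⟩
  set b := (C * c) ^ p
  set ε' := ε / 2 / (b + 1)
  have hb : 0 ≤ b := by positivity
  have hε' : 0 < ε' := by positivity
  have hbε' : b * ε' < ε / 2 := by
    rw [mul_div_assoc', div_lt_iff₀ (by positivity)]
    nlinarith
  obtain ⟨K, hK, hKP⟩ := htight ε' hε'
  set δ := (ε / 2) ^ p⁻¹
  have hδ : 0 < δ := by positivity
  have hδp : δ ^ p = ε / 2 := Real.rpow_inv_rpow (by positivity) hp.ne'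
  filter_upwards [Metric.tendstoUniformlyOn_iff.mp
    (ContinuousLinearMap.tendstoUniformlyOn_of_tendsto hA hK) δ hδ] with m hm
  refine (ciSup_le fun n => ?_).trans_lt (by linarith : ε / 2 + b * ε' < ε)
  calc ∫ ω, ‖A m (B n ω)‖ ^ p ∂P ≤ δ ^ p + b * P.real {ω | B n ω ∉ K} :=
        integral_rpow_norm_apply_le hp.le hδ.le hc.le
          (fun x hx => by simpa using (hm x hx).le) (hC m) (hbound n)
    _ ≤ ε / 2 + b * ε' := by
        rw [hδp]
        gcongr
        exact ENNReal.toReal_le_of_le_ofReal hε'.le (hKP n).le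

/-- **Uniform moment convergence (Appendix Lemma).**
Let `V` be a separable real Hilbert space, `(A m)` a sequence of bounded linear
operators on `V` converging strongly to `0`, and `(B n)` a sequence of `V`-valued
random variables on a probability space `(Ω, P)` which is uniformly bounded
(`‖B n‖ ≤ c` a.s.) and tight. Then for every `p > 0`,
`lim_{m→∞} sup_n E[‖A m (B n)‖^p] = 0`. -/
theorem sup_moment_tendsto_zero_of_strong_convergence
    {V : Type*} [NormedAddCommGroup V] [InnerProductSpace ℝ V] [CompleteSpace V]
    [SecondCountableTopology V] [MeasurableSpace V] [BorelSpace V]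
    {Ω : Type*} [MeasurableSpace Ω] (P : Measure Ω) [IsProbabilityMeasure P]
    (A : ℕ → V →L[ℝ] V)
    (hA : ∀ x : V, Tendsto (fun m : ℕ => A m x) atTop (𝓝 0))
    (B : ℕ → Ω → V) (hBmeas : ∀ n, Measurable (B n))
    (c : ℝ) (hc : 0 < c)
    (hbound : ∀ n, ∀ᵐ ω ∂P, ‖B n ω‖ ≤ c)
    (htight : ∀ ε : ℝ, 0 < ε → ∃ K : Set V, IsCompact K ∧
      ∀ n, P {ω | B n ω ∉ K} < ENNReal.ofReal ε) :
    ∀ p : ℝ, 0 < p →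
      Tendsto (fun m : ℕ => ⨆ n : ℕ, ∫ ω, ‖A m (B n ω)‖ ^ p ∂P) atTop (𝓝 0) :=
  sup_moment_tendsto_zero_of_strong_convergence_general P A hA B c hc hbound htight
end
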